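/- Define the atomic-stump multiset of a rooted tree t recursively: for t = τ_m t_1 ⋯ t_m where exactly n of the t_i equal τ (the single vertex) and the remaining k = m − n subtrees are u_1, …, u_k ≠ τ, the multiset is {s_{n, k}} ∪ stumps(u_1) ∪ ⋯ ∪ stumps(u_k), where s_{n,k} is a formal symbol (pair of naturals). Then two rooted trees of order 5, namely t_{12} = τ_2(τ)(τ_1(τ_1 τ)) and t_{15} = τ_1(τ_2(τ)(τ_1 τ)), have equal atomic-stump multisets, both equal to {s_{1,1}, s_{0,1}, s_{1,0}} (up to the paper's labeling {s_{31}-type factors}), while t_{12} ≠ t_{15}. -/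

import Mathlib

/-- Unordered rooted trees, represented as planar trees (lists of subtrees);
unordered identification is via the isomorphism relation `RTree.Iso`. -/
inductive RTree where
  | node : List RTree → RTree

namespace RTree

/-- The single-vertex tree τ. -/
def leaf : RTree := .node []

def isLeaf : RTree → Bool
  | .node [] => true
  | _ => false

/-- The order |t|: number of vertices. -/
def order : RTree → ℕ
  | .node l => 1 + (l.attach.map (fun t => order t.1)).sum
decreasing_by
  have := List.sizeOf_lt_of_mem t.2
  simp only [RTree.node.sizeOf_spec]
  omega

/-- Isomorphism of planar rooted trees: the lists of children agree up to
permutation and recursive isomorphism. -/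
inductive Iso : RTree → RTree → Prop
  | node {l₁ l₂ : List RTree} (l : List RTree) :
      List.Perm l₁ l → List.Forall₂ Iso l l₂ → Iso (.node l₁) (.node l₂)

end RTree

namespace RTree

/-- The multiset of atomic stumps of a tree: for each internal vertex we record
the pair (number of leaf children, number of non-leaf children). -/
def stumps : RTree → Multiset (ℕ × ℕ)
  | .node l =>
      (l.countP isLeaf, l.countP (fun t => !isLeaf t)) ::ₘ
        (l.attach.map (fun t => if isLeaf t.1 then (0 : Multiset (ℕ × ℕ)) else stumps t.1)).sum
decreasing_by
  have := List.sizeOf_lt_of_mem t.2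
  simp only [RTree.node.sizeOf_spec]
  omega

end RTree

/-- t₁₂ = τ₂(τ)(τ₁(τ₁ τ)). -/
def t12 : RTree := .node [.node [], .node [.node [.node []]]]

/-- t₁₅ = τ₁(τ₂(τ)(τ₁ τ)). -/
def t15 : RTree := .node [.node [.node [], .node [.node []]]]

/-!
Both trees are a spine of three internal vertices with one extra leaf. In t₁₂ the leaf hangs at
the root, which therefore has stump s₁₁, followed by s₀₁ and s₁₀ down the spine; in t₁₅ it hangs
at the middle vertex, giving s₀₁, s₁₁, s₁₀. The stump multiset forgets the order along the spine.
-/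

namespace RTree

theorem stumps_node (l : List RTree) :
    stumps (node l) = (l.countP isLeaf, l.countP (!isLeaf ·)) ::ₘ
      ((l.filter (!isLeaf ·)).map stumps).sum := by
  rw [stumps, List.attach_map_val (f := fun t => if isLeaf t then 0 else stumps t),
    List.sum_map_ite]
  simp

end RTree

theorem stumps_t12 : RTree.stumps t12 = {(1, 1), (0, 1), (1, 0)} := by
  simp [t12, RTree.stumps_node, RTree.isLeaf, List.countP_cons]

theorem stumps_t15 : RTree.stumps t15 = {(1, 1), (0, 1), (1, 0)} := by
  simp [t15, RTree.stumps_node, RTree.isLeaf, List.countP_cons, Multiset.cons_swap]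

theorem isomeric_pair_order_five :
    RTree.stumps t12 = RTree.stumps t15 ∧
    RTree.stumps t12 = ({(1, 1), (0, 1), (1, 0)} : Multiset (ℕ × ℕ)) ∧
    t12 ≠ t15 :=
  ⟨stumps_t12.trans stumps_t15.symm, stumps_t12, by simp [t12, t15]⟩
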